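/- Let W be a {0,1}-valued random variable and X a random vector with mean μ_X, and suppose a generalized linear model holds: g(E[Y | X, W]) = α + (X - μ_X)·β_W + λ·W, where β_0, β_1 may differ. Then the model coefficient λ equals the X-conditional experiment effect τ_{g,X} := E_X[ g(E[Y(1)|X]) - g(E[Y(0)|X]) ], where E[Y(w)|X] is given by the GLM with W = w. -/
import Mathlib


open MeasureTheory

/-- In a GLM `g(E[Y|X,W]) = α + (X - μ_X)·β_W + λW`, the coefficient `λ` equals the
`X`-conditional experiment effect `E_X[g(E[Y(1)|X]) - g(E[Y(0)|X])]`. -/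
theorem glm_coefficient_eq_conditional_effect {Ω : Type*} [MeasurableSpace Ω]
    (μ : Measure Ω) [IsProbabilityMeasure μ] {p : ℕ}
    (X : Ω → Fin p → ℝ) (μX : Fin p → ℝ) (α lam : ℝ) (β0 β1 : Fin p → ℝ)
    (g : ℝ → ℝ) (hg : StrictMono g)
    (m0 m1 : Ω → ℝ)  -- `m w ω = E[Y(w) | X] (ω)`
    (hX : ∀ i, Integrable (fun ω => X ω i) μ)
    (hμX : ∀ i, (∫ ω, X ω i ∂μ) = μX i)
    (hm0 : ∀ ω, g (m0 ω) = α + (∑ i, (X ω i - μX i) * β0 i) + lam * 0)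
    (hm1 : ∀ ω, g (m1 ω) = α + (∑ i, (X ω i - μX i) * β1 i) + lam * 1) :
    (∫ ω, (g (m1 ω) - g (m0 ω)) ∂μ) = lam := by
  have hfun : ∀ ω, g (m1 ω) - g (m0 ω)
      = (∑ i, (X ω i - μX i) * (β1 i - β0 i)) + lam := by
    intro ω
    rw [hm0 ω, hm1 ω]
    simp [Finset.sum_sub_distrib, mul_sub]
    ring
  have hint : ∀ i, Integrable (fun ω => (X ω i - μX i) * (β1 i - β0 i)) μ := by
    intro i
    exact ((hX i).sub (integrable_const _)).mul_const _
  calc (∫ ω, (g (m1 ω) - g (m0 ω)) ∂μ)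
      = ∫ ω, ((∑ i, (X ω i - μX i) * (β1 i - β0 i)) + lam) ∂μ := by
        simp_rw [hfun]
    _ = (∫ ω, (∑ i, (X ω i - μX i) * (β1 i - β0 i)) ∂μ) + ∫ _, lam ∂μ := by
        exact integral_add (integrable_finset_sum _ fun i _ => hint i) (integrable_const _)
    _ = (∑ i, ∫ ω, (X ω i - μX i) * (β1 i - β0 i) ∂μ) + lam := by
        rw [integral_finset_sum _ fun i _ => hint i]; simp
    _ = lam := by
        have : ∀ i : Fin p, (∫ ω, (X ω i - μX i) * (β1 i - β0 i) ∂μ) = 0 := by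
          intro i
          rw [integral_mul_const, integral_sub (hX i) (integrable_const _)]
          simp [hμX i]
        simp [this]
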